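/- arXiv:1204.5550 — 6 statements merged into one kernel-verified Lean document; each statement's English description precedes it below -/
import Mathlib

section
/- Let A, B, C, t be real numbers and define ℓ : ℝ⁵ → ℝ by ℓ(x₁,x₂,x₃,x₄,z) = A(x₁+x₂+x₃+x₄) + Bz + C, and f = ℓ^t on the open set U = {ℓ > 0}. Then at every point of U the left-hand side of equation (★) evaluated at f equals −4Bt·[(4A²+B²)t² + (2A²+B²)t − 2A²]·ℓ^{3t−3}. In particular, f satisfies (★) on U if and only if Bt[(4A²+B²)t² + (2A²+B²)t − 2A²] = 0. -/
/-!
Every derivative of `ℓ ^ t` for an affine `ℓ` is again a constant multiple of a power of `ℓ`: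
`∂ᵢ (k ℓ ^ s) = k s cᵢ ℓ ^ (s - 1)` with `cᵢ = ∂ᵢ ℓ`. Substituting the first three derivatives
into (★) makes every term a multiple of `ℓ ^ (3t - 3)`, and the coefficient is a polynomial in
`t` and the `cᵢ`. Since `ℓ` takes the value `1` when `B ≠ 0`, (★) holds on `{ℓ > 0}` exactly
when that coefficient vanishes.
-/

/-- The partial derivative of `f : ℝ⁵ → ℝ` in the `i`-th coordinate direction
(coordinates are `x₁, x₂, x₃, x₄` for indices `0,1,2,3` and `z` for index `4`). -/
noncomputable def pd (i : Fin 5) (f : (Fin 5 → ℝ) → ℝ) : (Fin 5 → ℝ) → ℝ :=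
  fun x => fderiv ℝ f x (Pi.single i 1)

/-- The left-hand side of equation (★):
`∑_{i=1}^{4} ( f² f_{iiz} − 2 f fᵢ f_{iz} + f f_z f_{ii} − 4 f_z fᵢ² )
  + 4 f_z ( f f_{zz} − 2 f_z² )`. -/
noncomputable def starLHS (f : (Fin 5 → ℝ) → ℝ) (x : Fin 5 → ℝ) : ℝ :=
  (∑ i : Fin 4,
      ((f x) ^ 2 * pd 4 (pd i.castSucc (pd i.castSucc f)) x
        - 2 * f x * pd i.castSucc f x * pd 4 (pd i.castSucc f) x
        + f x * pd 4 f x * pd i.castSucc (pd i.castSucc f) x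
        - 4 * pd 4 f x * (pd i.castSucc f x) ^ 2))
    + 4 * pd 4 f x * (f x * pd 4 (pd 4 f) x - 2 * (pd 4 f x) ^ 2)

open Set

lemma pd_congr_of_eqOn {U : Set (Fin 5 → ℝ)} (hU : IsOpen U) {g h : (Fin 5 → ℝ) → ℝ}
    (hgh : EqOn g h U) (i : Fin 5) : EqOn (pd i g) (pd i h) U := fun x hx => by
  simp only [pd, (hgh.eventuallyEq_of_mem (hU.mem_nhds hx)).fderiv_eq]

section AffinePower

variable {ℓ : (Fin 5 → ℝ) → ℝ} {D : (Fin 5 → ℝ) →L[ℝ] ℝ}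

lemma pd_const_mul_rpow_eqOn (hℓ : ∀ x, HasFDerivAt ℓ D x) (k s : ℝ) (i : Fin 5) :
    EqOn (pd i fun w => k * ℓ w ^ s)
      (fun w => k * s * D (Pi.single i 1) * ℓ w ^ (s - 1)) {w | ℓ w ≠ 0} := by
  intro y hy
  simp only [pd, (((hℓ y).rpow_const (Or.inl hy)).const_mul k).fderiv,
    smul_apply, smul_eq_mul]
  ring

theorem starLHS_rpow_of_hasFDerivAt (hℓ : ∀ x, HasFDerivAt ℓ D x) (t : ℝ) {x : Fin 5 → ℝ}
    (hx : 0 < ℓ x) :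
    starLHS (fun w => ℓ w ^ t) x =
      (-2 * t * D (Pi.single 4 1) * (2 * t ^ 2 + t - 1) *
          ∑ i : Fin 4, D (Pi.single i.castSucc 1) ^ 2
        - 4 * t ^ 2 * D (Pi.single 4 1) ^ 3 * (t + 1)) * ℓ x ^ (3 * t - 3) := by
  have hU : IsOpen {w | ℓ w ≠ 0} :=
    isOpen_ne_fun (continuous_iff_continuousAt.2 fun x => (hℓ x).continuousAt) continuous_const
  have d1 := pd_const_mul_rpow_eqOn hℓ 1 t
  have d2 i j := (pd_congr_of_eqOn hU (d1 i) j).trans (pd_const_mul_rpow_eqOn hℓ _ _ j)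
  have d3 i j k := (pd_congr_of_eqOn hU (d2 i j) k).trans (pd_const_mul_rpow_eqOn hℓ _ _ k)
  have hpow : ℓ x ^ (3 * t - 3) = (ℓ x ^ t) ^ 3 / ℓ x ^ 3 := by
    rw [Real.rpow_sub hx, ← Real.rpow_mul_natCast hx.le]
    norm_num [mul_comm]
  have hx' : x ∈ {w | ℓ w ≠ 0} := hx.ne'
  rw [show (fun w => ℓ w ^ t) = fun w => 1 * ℓ w ^ t by simp only [one_mul]]
  simp only [starLHS, d1 _ hx', d2 _ _ hx', d3 _ _ _ hx', Fin.sum_univ_four, hpow,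
    Real.rpow_sub_one hx.ne']
  field_simp
  ring

end AffinePower

def linForm (A B : ℝ) : (Fin 5 → ℝ) →L[ℝ] ℝ :=
  A • (.proj 0 + .proj 1 + .proj 2 + .proj 3) + B • .proj 4

lemma linForm_apply (A B : ℝ) (x : Fin 5 → ℝ) :
    linForm A B x = A * (x 0 + x 1 + x 2 + x 3) + B * x 4 := by
  simp [linForm, mul_add]

lemma linForm_single_castSucc (A B : ℝ) (i : Fin 4) :
    linForm A B (Pi.single i.castSucc 1) = A := by
  fin_cases i <;> simp [linForm_apply]

lemma linForm_single_four (A B : ℝ) : linForm A B (Pi.single 4 1) = B := by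
  simp [linForm_apply]

/-- for `ℓ = A(x₁+x₂+x₃+x₄)+Bz+C` and `f = ℓ^t`, on `{ℓ > 0}` the
left-hand side of (★) equals `−4Bt[(4A²+B²)t²+(2A²+B²)t−2A²]·ℓ^{3t−3}`; in particular
`f` satisfies (★) on `{ℓ > 0}` iff `Bt[(4A²+B²)t²+(2A²+B²)t−2A²] = 0`. -/
theorem stmt_0 (A B C t : ℝ) (ℓ f : (Fin 5 → ℝ) → ℝ)
    (hℓ : ∀ x, ℓ x = A * (x 0 + x 1 + x 2 + x 3) + B * x 4 + C)
    (hf : ∀ x, f x = ℓ x ^ t) :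
    (∀ x, 0 < ℓ x →
      starLHS f x =
        -4 * B * t * ((4 * A ^ 2 + B ^ 2) * t ^ 2 + (2 * A ^ 2 + B ^ 2) * t - 2 * A ^ 2)
          * ℓ x ^ (3 * t - 3)) ∧
    ((∀ x, 0 < ℓ x → starLHS f x = 0) ↔
      B * t * ((4 * A ^ 2 + B ^ 2) * t ^ 2 + (2 * A ^ 2 + B ^ 2) * t - 2 * A ^ 2) = 0) := by
  have hℓD x : HasFDerivAt ℓ (linForm A B) x := by
    rw [show ℓ = fun x => linForm A B x + C from funext fun x => by rw [hℓ, linForm_apply]]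
    exact (linForm A B).hasFDerivAt.add_const C
  have hstar x (hx : 0 < ℓ x) : starLHS f x =
      -4 * B * t * ((4 * A ^ 2 + B ^ 2) * t ^ 2 + (2 * A ^ 2 + B ^ 2) * t - 2 * A ^ 2)
        * ℓ x ^ (3 * t - 3) := by
    rw [show f = fun w => ℓ w ^ t from funext hf, starLHS_rpow_of_hasFDerivAt hℓD t hx]
    simp only [linForm_single_castSucc, linForm_single_four, Finset.sum_const, Finset.card_univ,
      Fintype.card_fin, nsmul_eq_mul]
    ring
  refine ⟨hstar, fun h => ?_, fun h x hx => ?_⟩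
  · by_cases hB : B = 0
    · simp [hB]
    · set x₀ : Fin 5 → ℝ := Pi.single 4 ((1 - C) / B)
      have hℓ₁ : ℓ x₀ = 1 := by
        simp only [x₀, hℓ, ne_eq, Fin.reduceEq, not_false_eq_true, Pi.single_eq_of_ne,
          Pi.single_eq_same, add_zero, mul_zero]
        field_simp
        ring
      have hpos : 0 < ℓ x₀ := hℓ₁ ▸ one_pos
      have := hstar x₀ hpos
      rw [h x₀ hpos, hℓ₁, Real.one_rpow] at this
      linarith
  · rw [hstar x hx]
    linear_combination -4 * ℓ x ^ (3 * t - 3) * h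
end

section
/- Let A, B, C be real numbers and define ℓ : ℝ⁵ → ℝ by ℓ(x₁,x₂,x₃,x₄,z) = A(x₁+x₂+x₃+x₄) + Bz + C. Then the function f = ℓ^{−1} = 1/ℓ satisfies equation (★) at every point of the open set {ℓ > 0}; moreover, if B ≠ 0 then ∂f/∂z is nowhere zero on this set. -/
/-!
The partial derivatives of an affine `ℓ` are constants `cⱼ`, so on `{ℓ ≠ 0}` the derivatives of
`f = ℓ⁻¹` are `fᵢ = -cᵢ ℓ⁻²`, `fᵢⱼ = 2 cᵢ cⱼ ℓ⁻³`, `fᵢⱼₖ = -6 cᵢ cⱼ cₖ ℓ⁻⁴`. Substituting, the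
`i`-th summand of (★) is `cᵢ² c_z ℓ⁻⁶ (-6 + 4 - 2 + 4) = 0` and the last term is
`4 f_z c_z² ℓ⁻⁴ (2 - 2) = 0`, whatever the gradient `c`. Finally `f_z = -B ℓ⁻²`.
-/

open Set

lemma hasDerivAt_const_mul_inv_pow (k : ℝ) (n : ℕ) {t : ℝ} (ht : t ≠ 0) :
    HasDerivAt (fun s => k * s⁻¹ ^ n) (-(n * k) * t⁻¹ ^ (n + 1)) t := by
  refine (((hasDerivAt_pow n t⁻¹).comp t (hasDerivAt_inv ht)).const_mul k).congr_deriv ?_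
  cases n with
  | zero => simp
  | succ m => simp only [Nat.add_sub_cancel, inv_pow]; field_simp; ring

section InverseOfAffine

variable {ℓ : (Fin 5 → ℝ) → ℝ} {L : (Fin 5 → ℝ) →L[ℝ] ℝ}

lemma pd_eqOn_of_eqOn {U : Set (Fin 5 → ℝ)} (hU : IsOpen U) {g h : (Fin 5 → ℝ) → ℝ}
    (hgh : EqOn g h U) (j : Fin 5) : EqOn (pd j g) (pd j h) U := fun y hy => by
  simp only [pd, (hgh.eventuallyEq_of_mem (hU.mem_nhds hy)).fderiv_eq]

lemma isOpen_setOf_ne_zero_of_hasFDerivAt (hℓ : ∀ y, HasFDerivAt ℓ L y) :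
    IsOpen {y | ℓ y ≠ 0} :=
  isOpen_ne_fun (continuous_iff_continuousAt.2 fun y => (hℓ y).continuousAt) continuous_const

lemma pd_const_mul_inv_pow (hℓ : ∀ y, HasFDerivAt ℓ L y) (j : Fin 5) (k : ℝ) (n : ℕ) :
    EqOn (pd j fun y => k * (ℓ y)⁻¹ ^ n)
      (fun y => -(n * k * L (Pi.single j 1)) * (ℓ y)⁻¹ ^ (n + 1)) {y | ℓ y ≠ 0} :=
  fun y hy => by
    have h : HasFDerivAt (fun y => k * (ℓ y)⁻¹ ^ n) _ y :=
      (hasDerivAt_const_mul_inv_pow k n hy).comp_hasFDerivAt y (hℓ y)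
    rw [pd, h.fderiv]
    simp only [smul_apply, smul_eq_mul]
    ring

lemma pd_inv (hℓ : ∀ y, HasFDerivAt ℓ L y) (i : Fin 5) :
    EqOn (pd i fun y => (ℓ y)⁻¹)
      (fun y => -L (Pi.single i 1) * (ℓ y)⁻¹ ^ 2) {y | ℓ y ≠ 0} := by
  have h := pd_const_mul_inv_pow hℓ i 1 1
  simp only [pow_one, one_mul, Nat.cast_one, mul_one] at h
  exact h

lemma pd_pd_inv (hℓ : ∀ y, HasFDerivAt ℓ L y) (i j : Fin 5) :
    EqOn (pd j (pd i fun y => (ℓ y)⁻¹))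
      (fun y => 2 * L (Pi.single i 1) * L (Pi.single j 1) * (ℓ y)⁻¹ ^ 3) {y | ℓ y ≠ 0} :=
  (pd_eqOn_of_eqOn (isOpen_setOf_ne_zero_of_hasFDerivAt hℓ) (pd_inv hℓ i) j).trans <|
    (pd_const_mul_inv_pow hℓ j _ 2).trans fun y _ => by push_cast; ring

lemma pd_pd_pd_inv (hℓ : ∀ y, HasFDerivAt ℓ L y) (i j k : Fin 5) :
    EqOn (pd k (pd j (pd i fun y => (ℓ y)⁻¹)))
      (fun y => -6 * L (Pi.single i 1) * L (Pi.single j 1) * L (Pi.single k 1) * (ℓ y)⁻¹ ^ 4)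
      {y | ℓ y ≠ 0} :=
  (pd_eqOn_of_eqOn (isOpen_setOf_ne_zero_of_hasFDerivAt hℓ) (pd_pd_inv hℓ i j) k).trans <|
    (pd_const_mul_inv_pow hℓ k _ 3).trans fun y _ => by push_cast; ring

lemma starLHS_inv_eq_zero (hℓ : ∀ y, HasFDerivAt ℓ L y) {x : Fin 5 → ℝ} (hx : ℓ x ≠ 0) :
    starLHS (fun y => (ℓ y)⁻¹) x = 0 := by
  simp only [starLHS, fun i => pd_inv hℓ i hx, fun i j => pd_pd_inv hℓ i j hx,
    fun i j k => pd_pd_pd_inv hℓ i j k hx, Fin.sum_univ_four]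
  ring

lemma pd_inv_ne_zero (hℓ : ∀ y, HasFDerivAt ℓ L y) {j : Fin 5} (hj : L (Pi.single j 1) ≠ 0)
    {x : Fin 5 → ℝ} (hx : ℓ x ≠ 0) : pd j (fun y => (ℓ y)⁻¹) x ≠ 0 := by
  rw [pd_inv hℓ j hx]
  exact mul_ne_zero (neg_ne_zero.2 hj) (pow_ne_zero 2 (inv_ne_zero hx))

end InverseOfAffine

lemma exists_hasFDerivAt_of_eq_affine {A B C : ℝ} {ℓ : (Fin 5 → ℝ) → ℝ}
    (hℓ : ∀ x, ℓ x = A * (x 0 + x 1 + x 2 + x 3) + B * x 4 + C) :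
    ∃ L : (Fin 5 → ℝ) →L[ℝ] ℝ, (∀ x, HasFDerivAt ℓ L x) ∧ L (Pi.single 4 1) = B := by
  let L : (Fin 5 → ℝ) →ₗ[ℝ] ℝ :=
    { toFun := fun x => A * (x 0 + x 1 + x 2 + x 3) + B * x 4
      map_add' := fun x y => by simp only [Pi.add_apply]; ring
      map_smul' := fun c x => by simp only [Pi.smul_apply, smul_eq_mul, RingHom.id_apply]; ring }
  refine ⟨L.toContinuousLinearMap, fun x => ?_, by simp [L]⟩
  rw [show ℓ = fun y => L.toContinuousLinearMap y + C from funext hℓ]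
  exact L.toContinuousLinearMap.hasFDerivAt.add_const C

/-- for `ℓ = A(x₁+x₂+x₃+x₄)+Bz+C`, the function `f = ℓ⁻¹` satisfies
equation (★) on `{ℓ > 0}`; moreover if `B ≠ 0` then `∂f/∂z` is nowhere zero there. -/
theorem stmt_1 (A B C : ℝ) (ℓ f : (Fin 5 → ℝ) → ℝ)
    (hℓ : ∀ x, ℓ x = A * (x 0 + x 1 + x 2 + x 3) + B * x 4 + C)
    (hf : ∀ x, f x = (ℓ x)⁻¹) :
    (∀ x, 0 < ℓ x → starLHS f x = 0) ∧
    (B ≠ 0 → ∀ x, 0 < ℓ x → pd 4 f x ≠ 0) := by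
  obtain ⟨L, hL, hLB⟩ := exists_hasFDerivAt_of_eq_affine hℓ
  obtain rfl : f = fun y => (ℓ y)⁻¹ := funext hf
  exact ⟨fun x hx => starLHS_inv_eq_zero hL hx.ne',
    fun hB x hx => pd_inv_ne_zero hL (hLB ▸ hB) hx.ne'⟩
end

section
/- Let A, B, C be real numbers with A ≠ 0, let 0 < t < 1, set w = (A,A,A,A,B) ∈ ℝ⁵, define ℓ : ℝ⁵ → ℝ by ℓ(x) = ⟨w,x⟩ + C, and let f = ℓ^t on the open set {ℓ > 0}. Then for every orthonormal pair of vectors a = (a₁,…,a₅), b = (b₁,…,b₅) in ℝ⁵ and every point x with ℓ(x) > 0, one has ∑_{i,j=1}^{5} (aᵢaⱼ + bᵢbⱼ)·f(x)·∂ᵢ∂ⱼf(x) − ∑_{i=1}^{5} (∂ᵢf(x))² < 0. -/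
set_option maxHeartbeats 1000000


/-- for `A ≠ 0`, `0 < t < 1`, `w = (A,A,A,A,B)`, `ℓ(x) = ⟨w,x⟩ + C`,
and `f = ℓ^t` on `{ℓ > 0}`: for every orthonormal pair `a, b ∈ ℝ⁵` and every `x`
with `ℓ(x) > 0`, one has
`∑_{i,j} (aᵢaⱼ + bᵢbⱼ)·f(x)·∂ᵢ∂ⱼf(x) − ∑_i (∂ᵢf(x))² < 0`. -/
theorem stmt_5 (A B C t : ℝ) (hA : A ≠ 0) (ht0 : 0 < t) (ht1 : t < 1)
    (w : Fin 5 → ℝ) (hw : w = ![A, A, A, A, B])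
    (ℓ f : (Fin 5 → ℝ) → ℝ)
    (hℓ : ∀ x, ℓ x = (∑ i, w i * x i) + C)
    (hf : ∀ x, f x = ℓ x ^ t)
    (a b : Fin 5 → ℝ)
    (ha : ∑ i, (a i) ^ 2 = 1) (hb : ∑ i, (b i) ^ 2 = 1) (hab : ∑ i, a i * b i = 0)
    (x : Fin 5 → ℝ) (hx : 0 < ℓ x) :
    (∑ i : Fin 5, ∑ j : Fin 5, (a i * a j + b i * b j) * f x * pd j (pd i f) x)
      - ∑ i : Fin 5, (pd i f x) ^ 2 < 0 := by
  classical
  set M : (Fin 5 → ℝ) →L[ℝ] ℝ := ∑ i : Fin 5, w i • ContinuousLinearMap.proj i with hM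
  have hMapp : ∀ v : Fin 5 → ℝ, M v = ∑ i, w i * v i := by
    intro v
    simp [hM, ContinuousLinearMap.sum_apply]
  have hMsingle : ∀ i : Fin 5, M (Pi.single i 1) = w i := by
    intro i
    rw [hMapp]
    simp [Pi.single_apply]
  have hℓfun : ℓ = fun y => M y + C := by
    funext y; rw [hℓ, hMapp]
  have hℓd : ∀ y, HasFDerivAt ℓ M y := by
    intro y
    rw [hℓfun]
    exact M.hasFDerivAt.add_const C
  -- first derivative
  have hfd : ∀ y, 0 < ℓ y → HasFDerivAt f ((t * ℓ y ^ (t - 1)) • M) y := by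
    intro y hy
    have h1 : HasDerivAt (fun s : ℝ => s ^ t) (t * ℓ y ^ (t - 1)) (ℓ y) :=
      Real.hasDerivAt_rpow_const (Or.inl hy.ne')
    have h2 := h1.comp_hasFDerivAt y (hℓd y)
    have hfeq : f = (fun s : ℝ => s ^ t) ∘ ℓ := funext fun z => hf z
    rw [hfeq]
    exact h2
  have hpdf : ∀ (i : Fin 5) (y), 0 < ℓ y → pd i f y = t * ℓ y ^ (t - 1) * w i := by
    intro i y hy
    unfold pd
    rw [(hfd y hy).fderiv]
    simp [hMsingle]
  -- second derivative at x
  have hU : IsOpen {y : Fin 5 → ℝ | 0 < ℓ y} := by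
    have hc : Continuous ℓ := by
      rw [hℓfun]; exact M.continuous.add continuous_const
    exact isOpen_lt continuous_const hc
  have hpd2 : ∀ i j : Fin 5,
      pd j (pd i f) x = t * ((t - 1) * ℓ x ^ (t - 1 - 1)) * w i * w j := by
    intro i j
    have hev : pd i f =ᶠ[nhds x] fun y => t * ℓ y ^ (t - 1) * w i :=
      Filter.eventuallyEq_of_mem (hU.mem_nhds hx) (fun y hy => hpdf i y hy)
    have hder : HasDerivAt (fun s : ℝ => t * s ^ (t - 1) * w i)
        (t * ((t - 1) * ℓ x ^ (t - 1 - 1)) * w i) (ℓ x) :=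
      ((Real.hasDerivAt_rpow_const (Or.inl hx.ne')).const_mul t).mul_const (w i)
    have hg : HasFDerivAt (fun y => t * ℓ y ^ (t - 1) * w i)
        ((t * ((t - 1) * ℓ x ^ (t - 1 - 1)) * w i) • M) x :=
      hder.comp_hasFDerivAt x (hℓd x)
    rw [show pd j (pd i f) x = fderiv ℝ (pd i f) x (Pi.single j 1) from rfl,
      hev.fderiv_eq, hg.fderiv]
    simp [hMsingle]
  have hpd1 : ∀ i : Fin 5, pd i f x = t * ℓ x ^ (t - 1) * w i := fun i => hpdf i x hx
  simp only [hpd2, hpd1, hf x]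
  set L := ℓ x with hL
  set α := ∑ i, a i * w i with hα
  set β := ∑ i, b i * w i with hβ
  set S := ∑ i, (w i) ^ 2 with hS
  have e1 : (∑ i : Fin 5, ∑ j : Fin 5,
      (a i * a j + b i * b j) * L ^ t * (t * ((t - 1) * L ^ (t - 1 - 1)) * w i * w j))
      = L ^ t * L ^ (t - 1 - 1) * (t * (t - 1)) * (α ^ 2 + β ^ 2) := by
    simp only [hα, hβ, Fin.sum_univ_five]
    ring
  have e2 : (∑ i : Fin 5, (t * L ^ (t - 1) * w i) ^ 2)
      = t ^ 2 * (L ^ (t - 1)) ^ 2 * S := by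
    simp only [hS, Fin.sum_univ_five]
    ring
  rw [e1, e2]
  have hQ : (L ^ (t - 1)) ^ 2 = L ^ t * L ^ (t - 1 - 1) := by
    rw [sq, ← Real.rpow_add hx, ← Real.rpow_add hx]
    congr 1
    ring
  rw [hQ]
  have hQpos : 0 < L ^ t * L ^ (t - 1 - 1) :=
    mul_pos (Real.rpow_pos_of_pos hx t) (Real.rpow_pos_of_pos hx (t - 1 - 1))
  have hSpos : 0 < S := by
    have hA2 : 0 < A ^ 2 := by positivity
    simp only [hS, hw, Fin.sum_univ_five]
    simp [Matrix.cons_val_zero, Matrix.cons_val_one]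
    nlinarith [sq_nonneg B]
  have htt : t * (t - 1) < 0 := mul_neg_of_pos_of_neg ht0 (by linarith)
  have h1 : L ^ t * L ^ (t - 1 - 1) * (t * (t - 1)) * (α ^ 2 + β ^ 2) ≤ 0 := by
    have hneg : L ^ t * L ^ (t - 1 - 1) * (t * (t - 1)) ≤ 0 :=
      (mul_neg_of_pos_of_neg hQpos htt).le
    have hnn : (0 : ℝ) ≤ α ^ 2 + β ^ 2 := by positivity
    nlinarith [mul_nonneg (neg_nonneg.mpr hneg) hnn]
  have h2 : 0 < t ^ 2 * (L ^ t * L ^ (t - 1 - 1)) * S := by positivity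
  linarith
end

section
/- Let U ⊆ ℝ and V ⊆ ℝ be open sets, and let p : U → ℝ and q : V → ℝ be smooth functions satisfying p·p'' − 3(p')² = 0 on U and q·q'' − 2(q')² = 0 on V. Define f : ℝ⁵ → ℝ on the open set {(x₁,x₂,x₃,x₄,z) : x₁ ∈ U, z ∈ V} by f(x₁,x₂,x₃,x₄,z) = p(x₁)·q(z). Then f satisfies equation (★) at every point of this set. More precisely, the left-hand side of (★) evaluated at f equals 2·p·q²·q'·(p·p'' − 3(p')²) + 4·p³·q'·(q·q'' − 2(q')²), where p and its derivatives are evaluated at x₁ and q and its derivatives at z. -/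
lemma pd_congr {g h : (Fin 5 → ℝ) → ℝ} {x : Fin 5 → ℝ} (he : g =ᶠ[nhds x] h) (i : Fin 5) :
    pd i g x = pd i h x := by unfold pd; rw [he.fderiv_eq]

lemma pd_zero (i : Fin 5) (y : Fin 5 → ℝ) : pd i (fun _ => (0:ℝ)) y = 0 := by simp [pd]

lemma pd_prod (a b : ℝ → ℝ) {x : Fin 5 → ℝ} (ha : DifferentiableAt ℝ a (x 0))
    (hb : DifferentiableAt ℝ b (x 4)) (i : Fin 5) :
    pd i (fun y => a (y 0) * b (y 4)) x =
      (if i = 0 then deriv a (x 0) * b (x 4) else 0)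
        + (if i = 4 then a (x 0) * deriv b (x 4) else 0) := by
  have h1 := ha.hasDerivAt.comp_hasFDerivAt x
    ((ContinuousLinearMap.proj 0 : ((Fin 5 → ℝ)) →L[ℝ] ℝ).hasFDerivAt (x := x))
  have h2 := hb.hasDerivAt.comp_hasFDerivAt x
    ((ContinuousLinearMap.proj 4 : ((Fin 5 → ℝ)) →L[ℝ] ℝ).hasFDerivAt (x := x))
  have h := h1.mul h2
  simp only [Function.comp, ContinuousLinearMap.proj_apply] at h
  rw [pd, (show HasFDerivAt (fun y : Fin 5 → ℝ => a (y 0) * b (y 4)) _ x from h).fderiv]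
  set_option linter.unnecessarySeqFocus false in
  fin_cases i <;>
    simp [ContinuousLinearMap.proj_apply, Pi.single_apply] <;> ring

lemma pd_mid (a b : ℝ → ℝ) (i : Fin 5) (hi0 : i ≠ 0) (hi4 : i ≠ 4) (y : Fin 5 → ℝ) :
    pd i (fun w => a (w 0) * b (w 4)) y = 0 := by
  by_cases h : DifferentiableAt ℝ (fun w : Fin 5 → ℝ => a (w 0) * b (w 4)) y
  · have hline : HasDerivAt (fun t : ℝ => y + t • (Pi.single i 1 : Fin 5 → ℝ))
        ((Pi.single i 1 : Fin 5 → ℝ)) 0 := by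
      simpa using ((hasDerivAt_id (0:ℝ)).smul_const ((Pi.single i 1 : Fin 5 → ℝ))).const_add y
    have hf2 : HasFDerivAt (fun w : Fin 5 → ℝ => a (w 0) * b (w 4))
        (fderiv ℝ (fun w : Fin 5 → ℝ => a (w 0) * b (w 4)) y)
        (y + (0:ℝ) • (Pi.single i 1 : Fin 5 → ℝ)) := by
      rw [show y + (0:ℝ) • (Pi.single i 1 : Fin 5 → ℝ) = y by simp]
      exact h.hasFDerivAt
    have hc := hf2.comp_hasDerivAt 0 hline
    have hc' : HasDerivAt (fun _ : ℝ => a (y 0) * b (y 4))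
        ((fderiv ℝ (fun w : Fin 5 → ℝ => a (w 0) * b (w 4)) y) (Pi.single i 1)) 0 :=
      hc.congr_of_eventuallyEq (Filter.Eventually.of_forall fun t => by
        simp [Function.comp, Pi.single_apply, Ne.symm hi0, Ne.symm hi4])
    have := (hasDerivAt_const (0:ℝ) (a (y 0) * b (y 4))).unique hc'
    simpa [pd] using this.symm
  · simp [pd, fderiv_zero_of_not_differentiableAt h]

/-- if `p` is smooth on an open set `U ⊆ ℝ` with `p·p'' − 3(p')² = 0`
on `U`, and `q` is smooth on an open set `V ⊆ ℝ` with `q·q'' − 2(q')² = 0` on `V`,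
then `f(x₁,…,x₄,z) = p(x₁)·q(z)` satisfies (★) at every point of
`{x : x₁ ∈ U, z ∈ V}`; more precisely, the left-hand side of (★) evaluated at `f`
equals `2pq²q'(pp'' − 3(p')²) + 4p³q'(qq'' − 2(q')²)`. -/
theorem stmt_8 (U V : Set ℝ) (hU : IsOpen U) (hV : IsOpen V)
    (p q : ℝ → ℝ) (hp : ContDiffOn ℝ (⊤ : ℕ∞) p U) (hq : ContDiffOn ℝ (⊤ : ℕ∞) q V)
    (hpODE : ∀ x ∈ U, p x * deriv (deriv p) x - 3 * (deriv p x) ^ 2 = 0)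
    (hqODE : ∀ z ∈ V, q z * deriv (deriv q) z - 2 * (deriv q z) ^ 2 = 0)
    (f : (Fin 5 → ℝ) → ℝ) (hf : ∀ x, f x = p (x 0) * q (x 4)) :
    ∀ x : Fin 5 → ℝ, x 0 ∈ U → x 4 ∈ V →
      starLHS f x =
        2 * p (x 0) * (q (x 4)) ^ 2 * deriv q (x 4)
            * (p (x 0) * deriv (deriv p) (x 0) - 3 * (deriv p (x 0)) ^ 2)
          + 4 * (p (x 0)) ^ 3 * deriv q (x 4)
            * (q (x 4) * deriv (deriv q) (x 4) - 2 * (deriv q (x 4)) ^ 2) ∧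
      starLHS f x = 0 := by
  have hfe : f = fun y => p (y 0) * q (y 4) := funext hf
  subst hfe
  intro x hxU hxV
  -- the open set S
  set S : Set (Fin 5 → ℝ) := ((fun y : Fin 5 → ℝ => y 0) ⁻¹' U) ∩ ((fun y : Fin 5 → ℝ => y 4) ⁻¹' V) with hSdef
  have hS : IsOpen S := (hU.preimage (continuous_apply 0)).inter (hV.preimage (continuous_apply 4))
  have hxS : x ∈ S := ⟨hxU, hxV⟩
  -- smoothness of derivatives
  have hp1 : ContDiffOn ℝ (⊤ : ℕ∞) (deriv p) U := hp.deriv_of_isOpen hU (by simp)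
  have hp2 : ContDiffOn ℝ (⊤ : ℕ∞) (deriv (deriv p)) U := hp1.deriv_of_isOpen hU (by simp)
  have hq1 : ContDiffOn ℝ (⊤ : ℕ∞) (deriv q) V := hq.deriv_of_isOpen hV (by simp)
  have dAt : ∀ (g : ℝ → ℝ) (W : Set ℝ), IsOpen W → ContDiffOn ℝ (⊤ : ℕ∞) g W →
      ∀ t ∈ W, DifferentiableAt ℝ g t := fun g W hW hg t ht =>
    (hg.contDiffAt (hW.mem_nhds ht)).differentiableAt (by simp)
  have dp := dAt p U hU hp
  have dp1 := dAt (deriv p) U hU hp1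
  have dp2 := dAt (deriv (deriv p)) U hU hp2
  have dq := dAt q V hV hq
  have dq1 := dAt (deriv q) V hV hq1
  -- first derivatives on S
  have e0 : ∀ y ∈ S, pd 0 (fun w => p (w 0) * q (w 4)) y = deriv p (y 0) * q (y 4) := by
    intro y hy
    rw [pd_prod p q (dp _ hy.1) (dq _ hy.2) 0, if_pos rfl, if_neg (by decide), add_zero]
  have e4 : ∀ y ∈ S, pd 4 (fun w => p (w 0) * q (w 4)) y = p (y 0) * deriv q (y 4) := by
    intro y hy
    rw [pd_prod p q (dp _ hy.1) (dq _ hy.2) 4, if_neg (by decide), if_pos rfl, zero_add]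
  have ev0 : ∀ y ∈ S, pd 0 (fun w => p (w 0) * q (w 4)) =ᶠ[nhds y]
      (fun w => deriv p (w 0) * q (w 4)) := fun y hy =>
    Filter.eventuallyEq_of_mem (hS.mem_nhds hy) e0
  have ev4 : ∀ y ∈ S, pd 4 (fun w => p (w 0) * q (w 4)) =ᶠ[nhds y]
      (fun w => p (w 0) * deriv q (w 4)) := fun y hy =>
    Filter.eventuallyEq_of_mem (hS.mem_nhds hy) e4
  -- second derivatives on S
  have e00 : ∀ y ∈ S, pd 0 (pd 0 (fun w => p (w 0) * q (w 4))) y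
      = deriv (deriv p) (y 0) * q (y 4) := by
    intro y hy
    rw [pd_congr (ev0 y hy) 0, pd_prod (deriv p) q (dp1 _ hy.1) (dq _ hy.2) 0, if_pos rfl, if_neg (by decide), add_zero]
  have e40 : pd 4 (pd 0 (fun w => p (w 0) * q (w 4))) x
      = deriv p (x 0) * deriv q (x 4) := by
    rw [pd_congr (ev0 x hxS) 4, pd_prod (deriv p) q (dp1 _ hxU) (dq _ hxV) 4, if_neg (by decide), if_pos rfl, zero_add]
  have e44 : pd 4 (pd 4 (fun w => p (w 0) * q (w 4))) x
      = p (x 0) * deriv (deriv q) (x 4) := by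
    rw [pd_congr (ev4 x hxS) 4, pd_prod p (deriv q) (dp _ hxU) (dq1 _ hxV) 4, if_neg (by decide), if_pos rfl, zero_add]
  -- third derivative
  have ev00 : pd 0 (pd 0 (fun w => p (w 0) * q (w 4))) =ᶠ[nhds x]
      (fun w => deriv (deriv p) (w 0) * q (w 4)) :=
    Filter.eventuallyEq_of_mem (hS.mem_nhds hxS) e00
  have e400 : pd 4 (pd 0 (pd 0 (fun w => p (w 0) * q (w 4)))) x
      = deriv (deriv p) (x 0) * deriv q (x 4) := by
    rw [pd_congr ev00 4, pd_prod (deriv (deriv p)) q (dp2 _ hxU) (dq _ hxV) 4, if_neg (by decide), if_pos rfl, zero_add]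
  -- middle directions vanish
  have mid : ∀ i : Fin 5, i ≠ 0 → i ≠ 4 →
      pd i (fun w => p (w 0) * q (w 4)) = fun _ => (0:ℝ) := fun i h0 h4 =>
    funext fun y => pd_mid p q i h0 h4 y
  have m1 := mid 1 (by decide) (by decide)
  have m2 := mid 2 (by decide) (by decide)
  have m3 := mid 3 (by decide) (by decide)
  have pz : ∀ i : Fin 5, pd i (fun _ => (0:ℝ)) = fun _ => (0:ℝ) := fun i =>
    funext fun y => pd_zero i y
  -- expand
  have key : starLHS (fun y => p (y 0) * q (y 4)) x =
      2 * p (x 0) * (q (x 4)) ^ 2 * deriv q (x 4)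
          * (p (x 0) * deriv (deriv p) (x 0) - 3 * (deriv p (x 0)) ^ 2)
        + 4 * (p (x 0)) ^ 3 * deriv q (x 4)
          * (q (x 4) * deriv (deriv q) (x 4) - 2 * (deriv q (x 4)) ^ 2) := by
    rw [starLHS, Fin.sum_univ_four]
    have c0 : ((0 : Fin 4)).castSucc = (0 : Fin 5) := rfl
    have c1 : ((1 : Fin 4)).castSucc = (1 : Fin 5) := rfl
    have c2 : ((2 : Fin 4)).castSucc = (2 : Fin 5) := rfl
    have c3 : ((3 : Fin 4)).castSucc = (3 : Fin 5) := rfl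
    rw [c0, c1, c2, c3, m1, m2, m3, pz, pz, pz, pz, pz, pz,
      e400, e40, e44, e00 x hxS, e0 x hxS, e4 x hxS]
    simp only
    ring
  refine ⟨key, ?_⟩
  rw [key, hpODE _ hxU, hqODE _ hxV]
  ring
end

section
/- Let A, B, C, D be positive real numbers and define f : ℝ⁵ → ℝ by f(x₁,x₂,x₃,x₄,z) = (Ax₁+B)^{−1/2}·(Cz+D)^{−1} on the open set {(x₁,x₂,x₃,x₄,z) : Ax₁+B > 0 and Cz+D > 0}. Then f satisfies equation (★) at every point of this set, and ∂f/∂z is nowhere zero on this set. -/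
/-
The function is separable, `f = u(x₁)·v(z)`, so all derivatives of `f` in the directions
`x₂, x₃, x₄` vanish and (★) collapses to
`2 u v' (v² (u u'' − 3 u'²) + 2 u² (v v'' − 2 v'²))`.
A power `φ(t) = (a t + b)^r` satisfies `r φ φ'' = (r − 1) φ'²`, so `u = (A x₁ + B)^{−1/2}` solves
`u u'' = 3 u'²` and `v = (C z + D)^{−1}` solves `v v'' = 2 v'²`; both brackets vanish. Finally
`f_z = u v'` with `u > 0` and `v' = −C (C z + D)^{−2} ≠ 0`.
-/

open Filter Topology

theorem Filter.EventuallyEq.pd {g h : (Fin 5 → ℝ) → ℝ} {x : Fin 5 → ℝ} (hgh : g =ᶠ[𝓝 x] h)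
    (i : Fin 5) : _root_.pd i g =ᶠ[𝓝 x] _root_.pd i h :=
  (hgh.fderiv (𝕜 := ℝ)).mono fun y hy => by simp only [_root_.pd, hy]

theorem pd_eventuallyEq_zero {g : (Fin 5 → ℝ) → ℝ} {x : Fin 5 → ℝ} (hg : g =ᶠ[𝓝 x] 0)
    (i : Fin 5) : pd i g =ᶠ[𝓝 x] 0 :=
  (hg.pd i).mono fun y hy => by simpa [pd] using hy

def sepProd (u v : ℝ → ℝ) : (Fin 5 → ℝ) → ℝ := fun x => u (x 0) * v (x 4)

theorem pd_sepProd {u v : ℝ → ℝ} {x : Fin 5 → ℝ} (hu : DifferentiableAt ℝ u (x 0))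
    (hv : DifferentiableAt ℝ v (x 4)) (i : Fin 5) :
    pd i (sepProd u v) x = (Pi.single i 1 : Fin 5 → ℝ) 0 * deriv u (x 0) * v (x 4)
      + (Pi.single i 1 : Fin 5 → ℝ) 4 * u (x 0) * deriv v (x 4) := by
  have hu' := HasDerivAt.comp_hasFDerivAt (f := fun y : Fin 5 → ℝ => y 0) x hu.hasDerivAt
    (hasFDerivAt_apply (𝕜 := ℝ) 0 x)
  have hv' := HasDerivAt.comp_hasFDerivAt (f := fun y : Fin 5 → ℝ => y 4) x hv.hasDerivAt
    (hasFDerivAt_apply (𝕜 := ℝ) 4 x)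
  rw [pd, HasFDerivAt.fderiv (f := sepProd u v) (hu'.mul hv')]
  simp only [Function.comp_apply, add_apply, smul_apply, ContinuousLinearMap.proj_apply,
    smul_eq_mul]
  ring

section SepProd

/- Analyticity is the regularity hypothesis because it passes to `deriv` and to nearby points,
which is what iterating the germ computations below requires. -/

variable {u v : ℝ → ℝ} {x : Fin 5 → ℝ}

theorem eventually_differentiableAt_sepProd (hu : AnalyticAt ℝ u (x 0))
    (hv : AnalyticAt ℝ v (x 4)) :
    ∀ᶠ y in 𝓝 x, DifferentiableAt ℝ u (y 0) ∧ DifferentiableAt ℝ v (y 4) :=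
  (((continuous_apply 0).tendsto x).eventually hu.eventually_analyticAt).and
    (((continuous_apply 4).tendsto x).eventually hv.eventually_analyticAt) |>.mono
    fun _ h => ⟨h.1.differentiableAt, h.2.differentiableAt⟩

theorem pd_zero_sepProd (hu : AnalyticAt ℝ u (x 0)) (hv : AnalyticAt ℝ v (x 4)) :
    pd 0 (sepProd u v) =ᶠ[𝓝 x] sepProd (deriv u) v :=
  (eventually_differentiableAt_sepProd hu hv).mono fun y h => by
    simp [pd_sepProd h.1 h.2, sepProd]

theorem pd_four_sepProd (hu : AnalyticAt ℝ u (x 0)) (hv : AnalyticAt ℝ v (x 4)) :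
    pd 4 (sepProd u v) =ᶠ[𝓝 x] sepProd u (deriv v) :=
  (eventually_differentiableAt_sepProd hu hv).mono fun y h => by
    simp [pd_sepProd h.1 h.2, sepProd]

theorem pd_sepProd_of_ne (hu : AnalyticAt ℝ u (x 0)) (hv : AnalyticAt ℝ v (x 4)) {j : Fin 5}
    (hj0 : j ≠ 0) (hj4 : j ≠ 4) : pd j (sepProd u v) =ᶠ[𝓝 x] 0 :=
  (eventually_differentiableAt_sepProd hu hv).mono fun y h => by
    simp [pd_sepProd h.1 h.2, hj0.symm, hj4.symm]

theorem starLHS_sepProd (hu : AnalyticAt ℝ u (x 0)) (hv : AnalyticAt ℝ v (x 4)) :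
    starLHS (sepProd u v) x = 2 * u (x 0) * deriv v (x 4) *
      (v (x 4) ^ 2 * (u (x 0) * deriv (deriv u) (x 0) - 3 * deriv u (x 0) ^ 2)
        + 2 * u (x 0) ^ 2 * (v (x 4) * deriv (deriv v) (x 4) - 2 * deriv v (x 4) ^ 2)) := by
  have h0 := pd_zero_sepProd hu hv
  have h00 := (h0.pd 0).trans (pd_zero_sepProd hu.deriv hv)
  have h04 := (h0.pd 4).trans (pd_four_sepProd hu.deriv hv)
  have h004 := (h00.pd 4).trans (pd_four_sepProd hu.deriv.deriv hv)
  have h4 := pd_four_sepProd hu hv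
  have h44 := (h4.pd 4).trans (pd_four_sepProd hu hv.deriv)
  have hside : ∀ j : Fin 5, j ≠ 0 → j ≠ 4 →
      pd j (sepProd u v) x = 0 ∧ pd j (pd j (sepProd u v)) x = 0 ∧
        pd 4 (pd j (sepProd u v)) x = 0 ∧ pd 4 (pd j (pd j (sepProd u v))) x = 0 := by
    intro j hj0 hj4
    have hj := pd_sepProd_of_ne hu hv hj0 hj4
    have hjj := pd_eventuallyEq_zero hj j
    exact ⟨hj.eq_of_nhds, hjj.eq_of_nhds, (pd_eventuallyEq_zero hj 4).eq_of_nhds,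
      (pd_eventuallyEq_zero hjj 4).eq_of_nhds⟩
  rw [starLHS, Fin.sum_univ_succ, Finset.sum_eq_zero fun i _ => by
    obtain ⟨h1, h2, h3, h4⟩ := hside i.succ.castSucc (by fin_cases i <;> decide)
      (by fin_cases i <;> decide)
    rw [h1, h2, h3, h4]
    ring]
  simp only [Fin.castSucc_zero, h0.eq_of_nhds, h00.eq_of_nhds, h04.eq_of_nhds, h004.eq_of_nhds,
    h4.eq_of_nhds, h44.eq_of_nhds, sepProd]
  ring

end SepProd

open scoped ContDiff

section AffinePow

noncomputable def affinePow (a b r t : ℝ) : ℝ := (a * t + b) ^ r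

variable {a b t : ℝ} (r : ℝ)

theorem analyticAt_affinePow (ht : 0 < a * t + b) : AnalyticAt ℝ (affinePow a b r) t :=
  ((by fun_prop : ContDiffAt ℝ ω (fun s => a * s + b) t).rpow_const_of_ne ht.ne').analyticAt

theorem deriv_affinePow (ht : 0 < a * t + b) :
    deriv (affinePow a b r) t = r * a * affinePow a b (r - 1) t := by
  have := ((hasDerivAt_id t).const_mul a |>.add_const b).rpow_const (p := r) (Or.inl ht.ne')
  rw [HasDerivAt.deriv (f := affinePow a b r) this]
  simp only [affinePow, id]
  ring

theorem deriv_deriv_affinePow (ht : 0 < a * t + b) :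
    deriv (deriv (affinePow a b r)) t = r * a * ((r - 1) * a * affinePow a b (r - 2) t) := by
  have hderiv : deriv (affinePow a b r) =ᶠ[𝓝 t] fun s => r * a * affinePow a b (r - 1) s :=
    (continuousAt_const.eventually_lt (g := fun s => a * s + b) (by fun_prop) ht).mono
      fun s hs => deriv_affinePow r hs
  rw [hderiv.deriv_eq, deriv_const_mul _ (analyticAt_affinePow _ ht).differentiableAt,
    deriv_affinePow _ ht]
  ring_nf

theorem mul_affinePow_mul_deriv_deriv (ht : 0 < a * t + b) :
    r * (affinePow a b r t * deriv (deriv (affinePow a b r)) t)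
      = (r - 1) * deriv (affinePow a b r) t ^ 2 := by
  have hsq : affinePow a b r t * affinePow a b (r - 2) t = affinePow a b (r - 1) t ^ 2 := by
    simp only [affinePow, ← Real.rpow_add ht, ← Real.rpow_natCast, ← Real.rpow_mul ht.le]
    ring_nf
  rw [deriv_deriv_affinePow r ht, deriv_affinePow r ht]
  linear_combination r ^ 2 * (r - 1) * a ^ 2 * hsq

end AffinePow

theorem stmt_9_general (A B C D : ℝ) (hC : 0 < C)
    (f : (Fin 5 → ℝ) → ℝ)
    (hf : ∀ x, f x = (A * x 0 + B) ^ (-(1 / 2 : ℝ)) * (C * x 4 + D)⁻¹) :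
    ∀ x : Fin 5 → ℝ, 0 < A * x 0 + B → 0 < C * x 4 + D →
      starLHS f x = 0 ∧ pd 4 f x ≠ 0 := by
  intro x hp hq
  obtain rfl : f = sepProd (affinePow A B (-(1 / 2))) (affinePow C D (-1)) :=
    funext fun y => by rw [hf, sepProd, affinePow, affinePow, Real.rpow_neg_one]
  have hu := analyticAt_affinePow (-(1 / 2)) hp
  have hv := analyticAt_affinePow (-1) hq
  constructor
  · rw [starLHS_sepProd hu hv]
    linear_combination (-4 * affinePow A B (-(1 / 2)) (x 0) * deriv (affinePow C D (-1)) (x 4)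
        * affinePow C D (-1) (x 4) ^ 2) * mul_affinePow_mul_deriv_deriv (-(1 / 2)) hp
      + (-4 * affinePow A B (-(1 / 2)) (x 0) ^ 3 * deriv (affinePow C D (-1)) (x 4))
        * mul_affinePow_mul_deriv_deriv (-1) hq
  · rw [(pd_four_sepProd hu hv).eq_of_nhds, sepProd, deriv_affinePow _ hq]
    simp only [affinePow]
    positivity

/-- for positive `A, B, C, D`, the function
`f(x₁,…,x₄,z) = (Ax₁+B)^{−1/2}·(Cz+D)^{−1}` satisfies equation (★) at every point
of `{Ax₁+B > 0 and Cz+D > 0}`, and `∂f/∂z` is nowhere zero on this set. -/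
theorem stmt_9 (A B C D : ℝ) (hA : 0 < A) (hB : 0 < B) (hC : 0 < C) (hD : 0 < D)
    (f : (Fin 5 → ℝ) → ℝ)
    (hf : ∀ x, f x = (A * x 0 + B) ^ (-(1 / 2 : ℝ)) * (C * x 4 + D)⁻¹) :
    ∀ x : Fin 5 → ℝ, 0 < A * x 0 + B → 0 < C * x 4 + D →
      starLHS f x = 0 ∧ pd 4 f x ≠ 0 :=
  stmt_9_general A B C D hC f hf
end

section
/- Let A, B, and α be real numbers and define f : ℝ → ℝ by f(z) = (Az+B)^{−1} on the open set {z : Az+B ≠ 0}. Then f satisfies α·f²·f''' + (4−α)·f·f'·f'' − 4·(2+α)·(f')³ = 0 at every point where Az+B ≠ 0. -/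
/-! Near a point where `u = A z + B ≠ 0`, `f` agrees with `u⁻¹`, so `f' = -A u⁻²`,
`f'' = 2 A² u⁻³` and `f''' = -6 A³ u⁻⁴`. The three terms of the equation are then `A³ u⁻⁶` times
`-6α`, `-2(4 - α)` and `4(2 + α)`, which sum to zero. -/

open Filter Topology

theorem eventually_affine_ne {A B z : ℝ} (hz : A * z + B ≠ 0) :
    ∀ᶠ w in 𝓝 z, A * w + B ≠ 0 :=
  (continuous_const.mul continuous_id |>.add continuous_const).continuousAt.eventually_ne hz

theorem hasDerivAt_affine_zpow (A B : ℝ) (n : ℤ) {z : ℝ} (hz : A * z + B ≠ 0) :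
    HasDerivAt (fun w => (A * w + B) ^ n) (n * A * (A * z + B) ^ (n - 1)) z := by
  have hlin : HasDerivAt (fun w : ℝ => A * w + B) A z := by
    simpa using ((hasDerivAt_id z).const_mul A).add_const B
  rw [mul_right_comm]
  exact (hasDerivAt_zpow n (A * z + B) (Or.inl hz)).comp z hlin

theorem Filter.EventuallyEq.deriv_affine_zpow {g : ℝ → ℝ} {A B c : ℝ} {n : ℤ} {z : ℝ}
    (hz : A * z + B ≠ 0) (hg : g =ᶠ[𝓝 z] fun w => c * (A * w + B) ^ n) :
    deriv g =ᶠ[𝓝 z] fun w => c * n * A * (A * w + B) ^ (n - 1) := by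
  filter_upwards [hg.eventually_nhds, eventually_affine_ne hz] with w hgw hw
  rw [EventuallyEq.deriv_eq hgw, ((hasDerivAt_affine_zpow A B n hw).const_mul c).deriv]
  ring

/-- the function `f(z) = (Az+B)^{−1}` satisfies
`α·f²·f''' + (4−α)·f·f'·f'' − 4·(2+α)·(f')³ = 0` at every point where `Az+B ≠ 0`. -/
theorem stmt_11 (A B α : ℝ) (f : ℝ → ℝ)
    (hf : ∀ z, A * z + B ≠ 0 → f z = (A * z + B)⁻¹) :
    ∀ z, A * z + B ≠ 0 →
      α * (f z) ^ 2 * deriv (deriv (deriv f)) z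
        + (4 - α) * f z * deriv f z * deriv (deriv f) z
        - 4 * (2 + α) * (deriv f z) ^ 3 = 0 := by
  intro z hz
  have h0 : f =ᶠ[𝓝 z] fun w => 1 * (A * w + B) ^ (-1 : ℤ) := by
    filter_upwards [eventually_affine_ne hz] with w hw
    rw [hf w hw, one_mul, zpow_neg_one]
  have h1 := h0.deriv_affine_zpow hz
  have h2 := h1.deriv_affine_zpow hz
  have h3 := h2.deriv_affine_zpow hz
  rw [h0.self_of_nhds, h1.self_of_nhds, h2.self_of_nhds, h3.self_of_nhds]
  norm_num [zpow_neg]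
  field_simp
  ring
end
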